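/- For every n ≥ 1 and prime p, Σ_{k=0}^{∞} f_n(p^k) x^k = ∏_{j=0}^{n-1} 1/(1 − p^j x) as formal power series, where f_n(p^k) is the number of subgroups of index p^k in ℤ^n. -/

import Mathlib

/-- The number of sublattices (subgroups) of index `m` in `ℤ^n`. -/
noncomputable def sublatticeCount (n m : ℕ) : ℕ :=
  Nat.card {H : AddSubgroup (Fin n → ℤ) // H.index = m}

/-! A finite-index subgroup `H ≤ A × ℤ` projects onto some `aℤ` with `a ≠ 0`. With `K = H ∩ A`
and any `(v, a) ∈ H`, the subgroup `H` is recovered from `(a, K, v + K)`, and conversely every such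
triple gives a subgroup of index `a · [A : K]`. Hence `f_{n+1}(m) = ∑_{d ∣ m} f_n(d) · d`. For
`m = p^k` this reads `F_{n+1}(x) · (1 - x) = F_n(p x)` for the generating series `F_n`, and since
`F_0 = 1` the product formula follows by induction on `n`. -/

open AddSubgroup

theorem Nat.div_ne_zero_of_mem_divisors {m d : ℕ} (hd : d ∈ m.divisors) : m / d ≠ 0 :=
  (Nat.div_pos (Nat.divisor_le hd) (Nat.pos_of_mem_divisors hd)).ne'

theorem AddSubgroup.index_eq_index_map_mul_index_comap {G G' K : Type*} [AddGroup G]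
    [AddGroup G'] [AddGroup K] (H : AddSubgroup G) [H.Normal] {f : G →+ G'} {g : K →+ G}
    (hf : Function.Surjective f) (hgf : g.range = f.ker) :
    H.index = (H.map f).index * (H.comap g).index := by
  rw [index_map, f.range_eq_top_of_surjective hf, index_top, mul_one, index_comap, hgf,
    ← relIndex_sup_left, mul_comm, relIndex_mul_index le_sup_left]

theorem AddSubgroup.index_eq_index_map_snd_mul_index_comap_inl {A B : Type*} [AddCommGroup A]
    [AddCommGroup B] (H : AddSubgroup (A × B)) :
    H.index = (H.map (AddMonoidHom.snd A B)).index * (H.comap (AddMonoidHom.inl A B)).index :=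
  H.index_eq_index_map_mul_index_comap Prod.snd_surjective <| by
    ext ⟨a, b⟩
    simp [AddMonoidHom.ker_snd, mem_prod, eq_comm]

section TwistedProd

variable {A : Type*} [AddCommGroup A]

def twistedProd (a : ℕ) (K : AddSubgroup A) (q : A ⧸ K) : AddSubgroup (A × ℤ) where
  carrier := {x | ∃ s : ℤ, x.2 = s * a ∧ (x.1 : A ⧸ K) = s • q}
  zero_mem' := ⟨0, by simp⟩
  add_mem' := by
    rintro x y ⟨s, hs, hsq⟩ ⟨r, hr, hrq⟩
    exact ⟨s + r, by simp [hs, hr, add_mul], by simp [hsq, hrq, add_smul]⟩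
  neg_mem' := by
    rintro x ⟨s, hs, hsq⟩
    exact ⟨-s, by simp [hs], by simp [hsq]⟩

variable {a : ℕ} {K : AddSubgroup A} {q : A ⧸ K}

theorem mem_twistedProd {x : A × ℤ} :
    x ∈ twistedProd a K q ↔ ∃ s : ℤ, x.2 = s * a ∧ (x.1 : A ⧸ K) = s • q :=
  Iff.rfl

theorem mk_mem_twistedProd (v : A) : (v, (a : ℤ)) ∈ twistedProd a K v :=
  ⟨1, by simp, by simp⟩

theorem map_snd_twistedProd :
    (twistedProd a K q).map (AddMonoidHom.snd A ℤ) = zmultiples (a : ℤ) := by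
  ext t
  simp only [mem_map, AddMonoidHom.coe_snd, mem_zmultiples_iff, smul_eq_mul]
  constructor
  · rintro ⟨x, ⟨s, hs, -⟩, rfl⟩
    exact ⟨s, hs.symm⟩
  · rintro ⟨s, rfl⟩
    exact ⟨(s • q.out, s * a), ⟨s, rfl, by simp⟩, rfl⟩

theorem comap_inl_twistedProd (ha : a ≠ 0) :
    (twistedProd a K q).comap (AddMonoidHom.inl A ℤ) = K := by
  ext x
  simp [mem_twistedProd, ha, QuotientAddGroup.eq_zero_iff]

theorem index_twistedProd (ha : a ≠ 0) : (twistedProd a K q).index = a * K.index := by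
  rw [index_eq_index_map_snd_mul_index_comap_inl, map_snd_twistedProd,
    comap_inl_twistedProd ha, Int.index_zmultiples, Int.natAbs_natCast]

theorem mk_eq_of_mem_twistedProd (ha : a ≠ 0) {v : A} (hv : (v, (a : ℤ)) ∈ twistedProd a K q) :
    (v : A ⧸ K) = q := by
  obtain ⟨s, hs, hvq⟩ := hv
  obtain rfl : s = 1 := by simpa [ha] using hs
  simpa using hvq

theorem eq_twistedProd {H : AddSubgroup (A × ℤ)}
    (hH : H.map (AddMonoidHom.snd A ℤ) = zmultiples (a : ℤ)) {v : A} (hv : (v, (a : ℤ)) ∈ H) :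
    H = twistedProd a (H.comap (AddMonoidHom.inl A ℤ)) v := by
  have mem_iff (x : A) (s : ℤ) :
      (x, s * (a : ℤ)) ∈ H ↔ (x : A ⧸ H.comap (AddMonoidHom.inl A ℤ)) = s • (v : A ⧸ _) := by
    have hsv : s • (v, (a : ℤ)) ∈ H := zsmul_mem hv s
    rw [← add_mem_cancel_right (neg_mem hsv), ← QuotientAddGroup.mk_zsmul,
      QuotientAddGroup.eq_iff_sub_mem]
    simp [mem_comap, sub_eq_add_neg]
  ext ⟨x, t⟩
  constructor
  · intro hx
    obtain ⟨s, rfl⟩ : ∃ s : ℤ, s * a = t := by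
      have ht := mem_map_of_mem (AddMonoidHom.snd A ℤ) hx
      rwa [hH, mem_zmultiples_iff] at ht
    exact ⟨s, rfl, (mem_iff x s).1 hx⟩
  · rintro ⟨s, rfl, hx⟩
    exact (mem_iff x s).2 hx

variable (A) in
def twistedProdOfIndex (m : ℕ) :
    (Σ (d : m.divisors) (K : {K : AddSubgroup A // K.index = d}), A ⧸ K.1) →
      {H : AddSubgroup (A × ℤ) // H.index = m}
  | ⟨⟨d, hd⟩, ⟨K, hK⟩, q⟩ => ⟨twistedProd (m / d) K q, by
    rw [index_twistedProd (Nat.div_ne_zero_of_mem_divisors hd), hK,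
      Nat.div_mul_cancel (Nat.dvd_of_mem_divisors hd)]⟩

theorem twistedProdOfIndex_injective (m : ℕ) : Function.Injective (twistedProdOfIndex A m) := by
  rintro ⟨⟨d, hd⟩, K, q⟩ ⟨⟨d', hd'⟩, K', q'⟩ h
  have had := Nat.div_ne_zero_of_mem_divisors hd
  have h : twistedProd (m / d) K.1 q = twistedProd (m / d') K'.1 q' := congrArg Subtype.val h
  have hKK : K.1 = K'.1 := by
    rw [← comap_inl_twistedProd had (q := q), h,
      comap_inl_twistedProd (Nat.div_ne_zero_of_mem_divisors hd')]
  obtain rfl : d = d' := by simpa [hKK, K'.2] using K.2.symm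
  obtain rfl : K = K' := Subtype.ext hKK
  obtain rfl : q = q' := by
    have hq := mk_mem_twistedProd (a := m / d) (K := K.1) q.out
    rw [QuotientAddGroup.out_eq', h] at hq
    rw [← mk_eq_of_mem_twistedProd had hq, QuotientAddGroup.out_eq']
  rfl

theorem twistedProdOfIndex_surjective {m : ℕ} (hm : m ≠ 0) :
    Function.Surjective (twistedProdOfIndex A m) := by
  rintro ⟨H, hH⟩
  obtain ⟨g, hg⟩ := Int.subgroup_cyclic (H.map (AddMonoidHom.snd A ℤ))
  have hmap : H.map (AddMonoidHom.snd A ℤ) = zmultiples (g.natAbs : ℤ) := by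
    rw [hg, ← zmultiples_eq_closure, Int.zmultiples_natAbs]
  set K := H.comap (AddMonoidHom.inl A ℤ)
  have hm' : g.natAbs * K.index = m := by
    rw [← hH, index_eq_index_map_snd_mul_index_comap_inl, hmap, Int.index_zmultiples,
      Int.natAbs_natCast]
  obtain ⟨⟨v, t⟩, hv, rfl⟩ := (mem_map (f := AddMonoidHom.snd A ℤ)).1
    (hmap ▸ mem_zmultiples (g.natAbs : ℤ))
  have hd : K.index ∈ m.divisors := Nat.mem_divisors.2 ⟨Dvd.intro_left _ hm', hm⟩
  refine ⟨⟨⟨K.index, hd⟩, ⟨K, rfl⟩, v⟩, Subtype.ext ?_⟩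
  have hdiv : m / K.index = g.natAbs := by
    rw [← hm', Nat.mul_div_cancel _ (Nat.pos_of_mem_divisors hd)]
  change twistedProd (m / K.index) K v = H
  rw [hdiv]
  exact (eq_twistedProd hmap hv).symm

end TwistedProd

section Count

variable {A : Type*} [AddCommGroup A]

theorem finite_sigma_quotient {d : ℕ} (hd : d ≠ 0) [Finite {K : AddSubgroup A // K.index = d}] :
    Finite (Σ K : {K : AddSubgroup A // K.index = d}, A ⧸ K.1) :=
  have (K : {K : AddSubgroup A // K.index = d}) : Finite (A ⧸ K.1) :=
    index_ne_zero_iff_finite.1 (K.2.trans_ne hd)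
  inferInstance

theorem card_sigma_quotient {d : ℕ} (hd : d ≠ 0) [Finite {K : AddSubgroup A // K.index = d}] :
    Nat.card (Σ K : {K : AddSubgroup A // K.index = d}, A ⧸ K.1) =
      Nat.card {K : AddSubgroup A // K.index = d} * d := by
  have (K : {K : AddSubgroup A // K.index = d}) : Finite (A ⧸ K.1) :=
    index_ne_zero_iff_finite.1 (K.2.trans_ne hd)
  have := Fintype.ofFinite {K : AddSubgroup A // K.index = d}
  rw [Nat.card_sigma, Finset.sum_congr rfl fun K _ => K.2, Finset.sum_const, Finset.card_univ,
    smul_eq_mul, Nat.card_eq_fintype_card]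

variable {m : ℕ}

theorem finite_subgroups_prod_int_of_index
    (hfin : ∀ d ≠ 0, Finite {K : AddSubgroup A // K.index = d}) (hm : m ≠ 0) :
    Finite {H : AddSubgroup (A × ℤ) // H.index = m} :=
  have (d : m.divisors) := hfin d (Nat.pos_of_mem_divisors d.2).ne'
  have (d : m.divisors) := finite_sigma_quotient (A := A) (Nat.pos_of_mem_divisors d.2).ne'
  Finite.of_surjective _ (twistedProdOfIndex_surjective hm)

theorem card_subgroups_prod_int_of_index
    (hfin : ∀ d ≠ 0, Finite {K : AddSubgroup A // K.index = d}) (hm : m ≠ 0) :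
    Nat.card {H : AddSubgroup (A × ℤ) // H.index = m} =
      ∑ d ∈ m.divisors, Nat.card {K : AddSubgroup A // K.index = d} * d := by
  have (d : m.divisors) := hfin d (Nat.pos_of_mem_divisors d.2).ne'
  have (d : m.divisors) := finite_sigma_quotient (A := A) (Nat.pos_of_mem_divisors d.2).ne'
  rw [← Nat.card_eq_of_bijective _
      ⟨twistedProdOfIndex_injective m, twistedProdOfIndex_surjective hm⟩,
    Nat.card_sigma, ← Finset.sum_coe_sort m.divisors]
  exact Finset.sum_congr rfl fun d _ => card_sigma_quotient (Nat.pos_of_mem_divisors d.2).ne'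

end Count

section Transport

variable {G G' : Type*} [AddGroup G] [AddGroup G']

def AddEquiv.subgroupsOfIndexCongr (e : G ≃+ G') (m : ℕ) :
    {H : AddSubgroup G // H.index = m} ≃ {H : AddSubgroup G' // H.index = m} :=
  e.mapAddSubgroup.toEquiv.subtypeEquiv fun H => by
    simp [AddEquiv.mapAddSubgroup, index_map_equiv]

theorem card_subgroups_of_index_of_subsingleton [Subsingleton G] (m : ℕ) :
    Nat.card {H : AddSubgroup G // H.index = m} = if m = 1 then 1 else 0 := by
  have hidx (H : AddSubgroup G) : H.index = 1 := index_eq_one.2 (Subsingleton.elim _ _)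
  split_ifs with hm
  · subst hm
    exact Nat.card_eq_one_iff_unique.2 ⟨inferInstance, ⟨⊤, hidx ⊤⟩⟩
  · have : IsEmpty {H : AddSubgroup G // H.index = m} := ⟨fun H => hm (H.2 ▸ hidx H.1)⟩
    exact Nat.card_of_isEmpty

end Transport

def Fin.piSuccAddEquivProd (M : Type*) [AddCommGroup M] (n : ℕ) :
    (Fin (n + 1) → M) ≃+ (Fin n → M) × M :=
  (Fin.consLinearEquiv ℤ fun _ => M).symm.toAddEquiv.trans AddEquiv.prodComm

theorem finite_sublattices_of_index (n : ℕ) {m : ℕ} (hm : m ≠ 0) :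
    Finite {H : AddSubgroup (Fin n → ℤ) // H.index = m} := by
  induction n generalizing m with
  | zero => infer_instance
  | succ n ih =>
    have := finite_subgroups_prod_int_of_index (fun _ => ih) hm
    exact .of_equiv _ ((Fin.piSuccAddEquivProd ℤ n).subgroupsOfIndexCongr m).symm

theorem sublatticeCount_zero (m : ℕ) : sublatticeCount 0 m = if m = 1 then 1 else 0 :=
  card_subgroups_of_index_of_subsingleton m

theorem sublatticeCount_succ (n : ℕ) {m : ℕ} (hm : m ≠ 0) :
    sublatticeCount (n + 1) m = ∑ d ∈ m.divisors, sublatticeCount n d * d := by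
  rw [sublatticeCount, Nat.card_congr ((Fin.piSuccAddEquivProd ℤ n).subgroupsOfIndexCongr m)]
  exact card_subgroups_prod_int_of_index (fun _ => finite_sublattices_of_index n) hm

namespace PowerSeries

variable {R : Type*} [CommRing R]

theorem mk_sum_range_mul_one_sub_X (g : ℕ → R) :
    mk (fun k => ∑ i ∈ Finset.range (k + 1), g i) * (1 - X) = mk g := by
  ext (_ | k)
  · simp
  · simp [mul_sub, coeff_succ_mul_X, Finset.sum_range_succ _ (k + 1)]

theorem rescale_one_sub_C_mul_X (c a : R) :
    rescale c (1 - C a * X) = 1 - C (a * c) * X := by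
  have rescale_C : rescale c (C a) = C a := by
    ext (_ | k) <;> simp [coeff_rescale, coeff_C]
  rw [map_sub, map_one, map_mul, rescale_C, rescale_X, map_mul, mul_assoc]

theorem prod_range_succ_one_sub_C_pow_mul_X (c : R) (n : ℕ) :
    ∏ j ∈ Finset.range (n + 1), (1 - C (c ^ j) * X) =
      (1 - X) * rescale c (∏ j ∈ Finset.range n, (1 - C (c ^ j) * X)) := by
  rw [Finset.prod_range_succ', pow_zero, map_one, one_mul, mul_comm, map_prod]
  congr 1
  exact Finset.prod_congr rfl fun j _ => by rw [rescale_one_sub_C_mul_X, pow_succ]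

end PowerSeries

open PowerSeries

theorem sublatticeCount_succ_prime_pow (n : ℕ) {p : ℕ} (hp : p.Prime) (k : ℕ) :
    (sublatticeCount (n + 1) (p ^ k) : ℤ) =
      ∑ i ∈ Finset.range (k + 1), (sublatticeCount n (p ^ i) : ℤ) * (p : ℤ) ^ i := by
  rw [sublatticeCount_succ n (pow_ne_zero k hp.ne_zero), Nat.sum_divisors_prime_pow hp]
  push_cast
  rfl

theorem mk_sublatticeCount_succ_mul_one_sub_X (n : ℕ) {p : ℕ} (hp : p.Prime) :
    mk (fun k => (sublatticeCount (n + 1) (p ^ k) : ℤ)) * (1 - X) =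
      rescale (p : ℤ) (mk fun k => (sublatticeCount n (p ^ k) : ℤ)) := by
  simp only [sublatticeCount_succ_prime_pow n hp, mk_sum_range_mul_one_sub_X]
  ext k
  simp [coeff_rescale, mul_comm]

theorem mk_sublatticeCount_zero {p : ℕ} (hp : p ≠ 1) :
    mk (fun k => (sublatticeCount 0 (p ^ k) : ℤ)) = 1 := by
  ext k
  simp [sublatticeCount_zero, coeff_one, hp]

theorem sublattice_count_prime_pow_generating_function_general (n p : ℕ)
    (hp : p.Prime) :
    (PowerSeries.mk fun k => (sublatticeCount n (p ^ k) : ℤ)) *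
        ∏ j ∈ Finset.range n, (1 - PowerSeries.C (R := ℤ) ((p : ℤ) ^ j) * PowerSeries.X) = 1 := by
  induction n with
  | zero => simp [mk_sublatticeCount_zero hp.ne_one]
  | succ n ih =>
    rw [prod_range_succ_one_sub_C_pow_mul_X, ← mul_assoc,
      mk_sublatticeCount_succ_mul_one_sub_X n hp, ← map_mul, ih, map_one]

/-- `Σ_{k≥0} f_n(p^k) x^k = ∏_{j=0}^{n-1} 1/(1 - p^j x)` in `ℤ[[x]]`: equivalently,
the product of the generating series with `∏_{j=0}^{n-1} (1 - p^j x)` is `1`. -/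
theorem sublattice_count_prime_pow_generating_function (n p : ℕ) (hn : 1 ≤ n)
    (hp : p.Prime) :
    (PowerSeries.mk fun k => (sublatticeCount n (p ^ k) : ℤ)) *
        ∏ j ∈ Finset.range n, (1 - PowerSeries.C (R := ℤ) ((p : ℤ) ^ j) * PowerSeries.X) = 1 :=
  sublattice_count_prime_pow_generating_function_general n p hp
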